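/- arXiv:1805.01073 — 7 statements merged into one kernel-verified Lean document; each statement's English description precedes it below -/
import Mathlib

section
/- Let C ⊆ ℝ^m be a nonempty, closed, convex set and A an n×m real matrix. If the null space of A intersects the relative interior of C in exactly one point {ȳ}, then the null space of A intersects the parallel subspace of C (i.e., the span of C − C) only in {0}. -/
open Matrix Set

noncomputable section

/-- ℝ^m as a function space. -/
abbrev V (m : ℕ) := Fin m → ℝ

/-- Null space of a matrix, as a set of vectors. -/
def nullSet {n m : ℕ} (A : Matrix (Fin n) (Fin m) ℝ) : Set (V m) := {x | A *ᵥ x = 0}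

/-- The subspace parallel to a convex set `C`, namely `ℝ(C − C)`. -/
def parSet {m : ℕ} (C : Set (V m)) : Set (V m) :=
  {x | ∃ t : ℝ, ∃ a ∈ C, ∃ b ∈ C, x = t • (a - b)}

/-- If `Null(A) ∩ ri C = {ybar}`, then `Null(A) ∩ par C = {0}`. -/
theorem stmt0 {n m : ℕ} (C : Set (V m)) (hne : C.Nonempty) (hcl : IsClosed C)
    (hcv : Convex ℝ C) (A : Matrix (Fin n) (Fin m) ℝ) (ybar : V m)
    (h : nullSet A ∩ intrinsicInterior ℝ C = {ybar}) :
    nullSet A ∩ parSet C = {0} := by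
  obtain ⟨c, hc⟩ := hne
  have hy : ybar ∈ nullSet A ∩ intrinsicInterior ℝ C := by rw [h]; rfl
  obtain ⟨hyN, hyI⟩ := hy
  ext x
  simp only [Set.mem_inter_iff, Set.mem_singleton_iff]
  constructor
  · rintro ⟨hxN, t, a, ha, b, hb, rfl⟩
    by_contra hx0
    set x : V m := t • (a - b) with hxdef
    -- x lies in the direction of the affine span of C
    have hxdir : x ∈ (affineSpan ℝ C).direction := by
      apply Submodule.smul_mem
      have := AffineSubspace.vsub_mem_direction (subset_affineSpan ℝ C ha)
        (subset_affineSpan ℝ C hb)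
      simpa using this
    have hyS : ybar ∈ affineSpan ℝ C := by
      have := intrinsicInterior_subset (𝕜 := ℝ) (s := C) hyI
      exact subset_affineSpan ℝ C this
    have hmem : ∀ ε : ℝ, ybar + ε • x ∈ affineSpan ℝ C := by
      intro ε
      have : (ε • x) +ᵥ ybar ∈ affineSpan ℝ C :=
        AffineSubspace.vadd_mem_of_mem_direction (Submodule.smul_mem _ ε hxdir) hyS
      simpa [add_comm] using this
    -- the map ε ↦ ybar + ε • x into the affine span, as a subtype-valued map
    set S := affineSpan ℝ C
    have hcont : Continuous (fun ε : ℝ => (⟨ybar + ε • x, hmem ε⟩ : S)) := by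
      apply Continuous.subtype_mk
      exact continuous_const.add (continuous_id.smul continuous_const)
    obtain ⟨y, hyint, hyeq⟩ := mem_intrinsicInterior.mp hyI
    have hy0 : (⟨ybar + (0:ℝ) • x, hmem 0⟩ : S) ∈ interior ((↑) ⁻¹' C : Set S) := by
      have : (⟨ybar + (0:ℝ) • x, hmem 0⟩ : S) = y := by
        apply Subtype.ext
        simp [hyeq]
      rw [this]; exact hyint
    have hopen : IsOpen ((fun ε : ℝ => (⟨ybar + ε • x, hmem ε⟩ : S)) ⁻¹'
        interior ((↑) ⁻¹' C : Set S)) := (isOpen_interior).preimage hcont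
    rw [Metric.isOpen_iff] at hopen
    obtain ⟨δ, hδ, hball⟩ := hopen 0 hy0
    have hε : (δ/2) ∈ Metric.ball (0:ℝ) δ := by
      rw [Metric.mem_ball, Real.dist_eq, sub_zero, abs_of_pos (half_pos hδ)]
      linarith
    have hmem2 : ybar + (δ/2) • x ∈ intrinsicInterior ℝ C :=
      mem_intrinsicInterior.mpr ⟨_, hball hε, rfl⟩
    have hN2 : ybar + (δ/2) • x ∈ nullSet A := by
      simp only [nullSet, Set.mem_setOf_eq, mulVec_add, mulVec_smul] at hxN hyN ⊢
      simp [hxN, hyN]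
    have : ybar + (δ/2) • x = ybar := by
      have : ybar + (δ/2) • x ∈ ({ybar} : Set (V m)) := h ▸ ⟨hN2, hmem2⟩
      simpa using this
    have hsx : (δ/2) • x = 0 := by
      have := congrArg (· - ybar) this
      simpa using this
    have : x = 0 := by
      have h2 : (δ/2) ≠ 0 := by positivity
      exact (smul_eq_zero.mp hsx).resolve_left h2
    exact hx0 this
  · rintro rfl
    refine ⟨by simp [nullSet], 0, c, hc, c, hc, by simp⟩
end
end

section
/- Suppose h : ℝ^m → ℝ ∪ {+∞} is a convex piecewise linear-quadratic function, c : ℝ^n → ℝ^m is C², f = h ∘ c, and x̄ ∈ dom f. If the transversality condition Null(Dc(x̄)ᵀ) ∩ par(∂h(c(x̄))) = {0} holds, then the basic constraint qualification Null(Dc(x̄)ᵀ) ∩ N(c(x̄) | dom h) = {0} holds, where N denotes the normal cone to the convex set dom h. -/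
open Matrix Set

noncomputable section

/-- Effective domain of an extended-real-valued function. -/
def domf {m : ℕ} (h : V m → EReal) : Set (V m) := {x | h x < ⊤}

/-- Convex subdifferential. -/
def subdiff {m : ℕ} (h : V m → EReal) (c : V m) : Set (V m) :=
  {y | ∀ z, h c + ((y ⬝ᵥ (z - c) : ℝ) : EReal) ≤ h z}

/-- Normal cone of convex analysis to a convex set `D` at `c`. -/
def normalCone {m : ℕ} (D : Set (V m)) (c : V m) : Set (V m) :=
  {v | ∀ d ∈ D, v ⬝ᵥ (d - c) ≤ 0}

/-- Polyhedral sets: finite systems of linear inequalities. -/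
def IsPolyhedral {m : ℕ} (C : Set (V m)) : Prop :=
  ∃ (s : ℕ) (a : Fin s → V m) (α : Fin s → ℝ), C = {x | ∀ j, a j ⬝ᵥ x ≤ α j}

/-- Convexity of an extended-real-valued function, via its epigraph. -/
def ConvexFun {m : ℕ} (h : V m → EReal) : Prop :=
  Convex ℝ {p : V m × ℝ | h p.1 ≤ (p.2 : EReal)}

/-- `h` is proper piecewise linear-quadratic: the domain is a finite union of
polyhedral sets on each of which `h` is given by a quadratic expression. -/
def IsPLQ {m : ℕ} (h : V m → EReal) : Prop :=
  (∃ x, h x < ⊤) ∧ (∀ x, h x ≠ ⊥) ∧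
  ∃ (K : ℕ) (C : Fin (K + 1) → Set (V m)) (Q : Fin (K + 1) → Matrix (Fin m) (Fin m) ℝ)
    (b : Fin (K + 1) → V m) (β : Fin (K + 1) → ℝ),
    domf h = ⋃ k, C k ∧
    (∀ k, IsPolyhedral (C k)) ∧
    (∀ k, (Q k).IsSymm) ∧
    (∀ k, ∀ x ∈ C k,
      h x = (((1 / 2) * (x ⬝ᵥ (Q k *ᵥ x)) + b k ⬝ᵥ x + β k : ℝ) : EReal))

/- Off `dom h` the subgradient inequality is trivial, and on `dom h` adding a normal vector only
lowers the linear term. -/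
theorem add_mem_subdiff_of_mem_normalCone {m : ℕ} {h : V m → EReal} {c a v : V m}
    (ha : a ∈ subdiff h c) (hv : v ∈ normalCone (domf h) c) : a + v ∈ subdiff h c := by
  intro z
  rcases lt_or_eq_of_le (le_top : h z ≤ ⊤) with hz | hz
  · have hle : (a + v) ⬝ᵥ (z - c) ≤ a ⬝ᵥ (z - c) := by
      rw [add_dotProduct]
      linarith [hv z hz]
    calc h c + (((a + v) ⬝ᵥ (z - c) : ℝ) : EReal)
        ≤ h c + ((a ⬝ᵥ (z - c) : ℝ) : EReal) := by gcongr
      _ ≤ h z := ha z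
  · exact hz ▸ le_top

theorem normalCone_subset_parSet_subdiff {m : ℕ} {h : V m → EReal} {c : V m}
    (hne : (subdiff h c).Nonempty) : normalCone (domf h) c ⊆ parSet (subdiff h c) := by
  obtain ⟨a, ha⟩ := hne
  intro v hv
  exact ⟨1, a + v, add_mem_subdiff_of_mem_normalCone ha hv, a, ha, by simp⟩

theorem zero_mem_normalCone {m : ℕ} (D : Set (V m)) (c : V m) : (0 : V m) ∈ normalCone D c :=
  fun d _ => by simp

theorem stmt2_general {n m : ℕ} (h : V m → EReal) (c : V n → V m)
    (xbar : V n)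
    (htrans : {y : V m | ∀ d, y ⬝ᵥ (fderiv ℝ c xbar d) = 0}
        ∩ parSet (subdiff h (c xbar)) = {0}) :
    {y : V m | ∀ d, y ⬝ᵥ (fderiv ℝ c xbar d) = 0}
      ∩ normalCone (domf h) (c xbar) = {0} := by
  -- the transversality equation puts `0` in `par ∂h(c xbar)`, so `∂h(c xbar)` is nonempty
  have hzero : (0 : V m) ∈ {y : V m | ∀ d, y ⬝ᵥ (fderiv ℝ c xbar d) = 0}
      ∩ parSet (subdiff h (c xbar)) := htrans ▸ rfl
  obtain ⟨-, -, a, ha, -⟩ := hzero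
  refine subset_antisymm ?_ ?_
  · rw [← htrans]
    exact inter_subset_inter_right _ (normalCone_subset_parSet_subdiff ⟨a, ha⟩)
  · rintro _ rfl
    exact ⟨fun d => zero_dotProduct _, zero_mem_normalCone _ _⟩

/-- Transversality implies the basic constraint qualification. -/
theorem stmt2 {n m : ℕ} (h : V m → EReal) (c : V n → V m)
    (hplq : IsPLQ h) (hconv : ConvexFun h) (hc : ContDiff ℝ 2 c)
    (xbar : V n) (hdom : c xbar ∈ domf h)
    (htrans : {y : V m | ∀ d, y ⬝ᵥ (fderiv ℝ c xbar d) = 0}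
        ∩ parSet (subdiff h (c xbar)) = {0}) :
    {y : V m | ∀ d, y ⬝ᵥ (fderiv ℝ c xbar d) = 0}
      ∩ normalCone (domf h) (c xbar) = {0} :=
  stmt2_general h c xbar htrans
end
end

section
/- Let h : ℝ^m → ℝ ∪ {+∞} be convex piecewise linear-quadratic, with dom h = ⋃_{k} C_k, where each C_k is polyhedral and on C_k, h(c) = (1/2)⟨c, Q_k c⟩ + ⟨b_k, c⟩ + β_k with Q_k symmetric. Then for every k, ⟨c, Q_k c⟩ ≥ 0 for all c in the subspace parallel to C_k. -/
open Matrix Set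

noncomputable section

/-- For a convex PLQ function, each quadratic piece `Q_k` is positive semidefinite
on the subspace parallel to its polyhedral piece `C_k`. -/
theorem stmt4 {m K : ℕ} (h : V m → EReal)
    (C : Fin (K + 1) → Set (V m)) (Q : Fin (K + 1) → Matrix (Fin m) (Fin m) ℝ)
    (b : Fin (K + 1) → V m) (β : Fin (K + 1) → ℝ)
    (hproper : (∃ x, h x < ⊤) ∧ ∀ x, h x ≠ ⊥)
    (hconv : ConvexFun h)
    (hdom : domf h = ⋃ k, C k)
    (hpoly : ∀ k, IsPolyhedral (C k))
    (hsym : ∀ k, (Q k).IsSymm)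
    (hquad : ∀ k, ∀ x ∈ C k,
      h x = (((1 / 2) * (x ⬝ᵥ (Q k *ᵥ x)) + b k ⬝ᵥ x + β k : ℝ) : EReal)) :
    ∀ k, ∀ x ∈ parSet (C k), 0 ≤ x ⬝ᵥ (Q k *ᵥ x) := by
  intro k x hx
  obtain ⟨t, a, ha, c, hc, rfl⟩ := hx
  -- bilinearity and symmetry facts
  have hBsymm : ∀ u v : V m, u ⬝ᵥ Q k *ᵥ v = v ⬝ᵥ Q k *ᵥ u := by
    intro u v
    rw [Matrix.dotProduct_mulVec, ← Matrix.mulVec_transpose, (hsym k).eq,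
      dotProduct_comm]
  -- convexity of C k
  have hCconv : Convex ℝ (C k) := by
    obtain ⟨s, av, α, hC⟩ := hpoly k
    rw [hC]
    intro p hp q hq u v hu hv huv
    intro j
    have hp' := hp j
    have hq' := hq j
    simp only [dotProduct_add, dotProduct_smul, smul_eq_mul]
    have h1 := mul_le_mul_of_nonneg_left hp' hu
    have h2 := mul_le_mul_of_nonneg_left hq' hv
    have h3 : u * α j + v * α j = α j := by rw [← add_mul, huv, one_mul]
    linarith
  -- midpoint
  set mp : V m := (1/2 : ℝ) • a + (1/2 : ℝ) • c with hmp
  have hmpC : mp ∈ C k := hCconv ha hc (by norm_num) (by norm_num) (by norm_num)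
  set qa : ℝ := (1 / 2) * (a ⬝ᵥ (Q k *ᵥ a)) + b k ⬝ᵥ a + β k with hqa
  set qc : ℝ := (1 / 2) * (c ⬝ᵥ (Q k *ᵥ c)) + b k ⬝ᵥ c + β k with hqc
  have hmem1 : ((a, qa) : V m × ℝ) ∈ {p : V m × ℝ | h p.1 ≤ (p.2 : EReal)} := by
    simp only [Set.mem_setOf_eq, hquad k a ha, hqa]
    exact le_rfl
  have hmem2 : ((c, qc) : V m × ℝ) ∈ {p : V m × ℝ | h p.1 ≤ (p.2 : EReal)} := by
    simp only [Set.mem_setOf_eq, hquad k c hc, hqc]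
    exact le_rfl
  have hconv' := hconv hmem1 hmem2 (by norm_num : (0:ℝ) ≤ 1/2)
    (by norm_num : (0:ℝ) ≤ 1/2) (by norm_num)
  simp only [Prod.smul_mk, Prod.mk_add_mk, Set.mem_setOf_eq, smul_eq_mul] at hconv'
  have hhm : h mp = (((1 / 2) * (mp ⬝ᵥ (Q k *ᵥ mp)) + b k ⬝ᵥ mp + β k : ℝ) : EReal) :=
    hquad k mp hmpC
  rw [hhm] at hconv'
  have hreal : (1 / 2) * (mp ⬝ᵥ (Q k *ᵥ mp)) + b k ⬝ᵥ mp + β k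
      ≤ (1/2) * qa + (1/2) * qc := EReal.coe_le_coe_iff.mp hconv'
  -- expand the quadratic form at the midpoint
  have hexp : mp ⬝ᵥ (Q k *ᵥ mp) = (1/4) * (a ⬝ᵥ (Q k *ᵥ a)) + (1/2) * (a ⬝ᵥ (Q k *ᵥ c))
      + (1/4) * (c ⬝ᵥ (Q k *ᵥ c)) := by
    simp only [hmp, Matrix.mulVec_add, Matrix.mulVec_smul, dotProduct_add,
      add_dotProduct, smul_dotProduct, dotProduct_smul, smul_eq_mul]
    rw [hBsymm c a]
    ring
  have hblin : b k ⬝ᵥ mp = (1/2) * (b k ⬝ᵥ a) + (1/2) * (b k ⬝ᵥ c) := by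
    simp only [hmp, dotProduct_add, dotProduct_smul, smul_eq_mul]
  rw [hexp, hblin, hqa, hqc] at hreal
  have hdd : 0 ≤ (a - c) ⬝ᵥ (Q k *ᵥ (a - c)) := by
    have hx : (a - c) ⬝ᵥ (Q k *ᵥ (a - c)) = a ⬝ᵥ (Q k *ᵥ a) - 2 * (a ⬝ᵥ (Q k *ᵥ c))
        + c ⬝ᵥ (Q k *ᵥ c) := by
      simp only [Matrix.mulVec_sub, dotProduct_sub, sub_dotProduct]
      rw [hBsymm c a]
      ring
    rw [hx]
    linarith
  have hsc : (t • (a - c)) ⬝ᵥ (Q k *ᵥ (t • (a - c)))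
      = t * t * ((a - c) ⬝ᵥ (Q k *ᵥ (a - c))) := by
    simp only [Matrix.mulVec_smul, smul_dotProduct, dotProduct_smul, smul_eq_mul]
    ring
  rw [hsc]
  nlinarith [sq_nonneg t]
end
end

section
/- Let h be convex piecewise linear-quadratic, c : ℝ^n → ℝ^m be C², f = h ∘ c, and x̄ ∈ dom f be such that the basic constraint qualification holds at x̄. Set c̄ = c(x̄). Then the cone of non-ascent directions D(x̄) := {d : h'(c̄; Dc(x̄)d) ≤ 0} equals the union over active indices k ∈ K(c̄) of the polyhedral sets {d : Dc(x̄)d ∈ T(c̄ | C_k) and ⟨Q_k c̄ + b_k, Dc(x̄)d⟩ ≤ 0}. -/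
open Matrix Set

noncomputable section

def tangentConeC {m : ℕ} (D : Set (V m)) (c : V m) : Set (V m) :=
  closure {v | ∃ t : ℝ, 0 < t ∧ ∃ d ∈ D, v = t • (d - c)}

/-- One-sided directional derivative, as a lower limit of difference quotients. -/
def dirDeriv {m : ℕ} (h : V m → EReal) (c w : V m) : EReal :=
  Filter.liminf (fun t : ℝ => ((t⁻¹ : ℝ) : EReal) * (h (c + t • w) - h c))
    (nhdsWithin 0 (Set.Ioi 0))

/- ### Auxiliary lemmas -/

lemma dot_cont {m : ℕ} (a : V m) : Continuous fun v : V m => a ⬝ᵥ v := by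
  simp only [dotProduct]
  exact continuous_finset_sum _ fun i _ => continuous_const.mul (continuous_apply i)

lemma symm_dot {m : ℕ} {A : Matrix (Fin m) (Fin m) ℝ} (hA : A.IsSymm) (v w : V m) :
    v ⬝ᵥ (A *ᵥ w) = w ⬝ᵥ (A *ᵥ v) := by
  rw [Matrix.dotProduct_mulVec, ← Matrix.mulVec_transpose, hA.eq, dotProduct_comm]

/-- points on a segment from a point of a convex set in a given direction -/
lemma seg_mem {m : ℕ} {D : Set (V m)} (hD : Convex ℝ D) {cb w : V m} (h0 : cb ∈ D)
    {t₁ : ℝ} (ht₁ : 0 < t₁) (h1 : cb + t₁ • w ∈ D) :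
    ∀ t : ℝ, 0 < t → t ≤ t₁ → cb + t • w ∈ D := by
  intro t ht htt
  have hle : t / t₁ ≤ 1 := (div_le_one ht₁).2 htt
  have hnn : (0:ℝ) ≤ t / t₁ := le_of_lt (div_pos ht ht₁)
  have hcomb := hD h0 h1 (by linarith : (0:ℝ) ≤ 1 - t / t₁) hnn (by ring)
  have heq : (1 - t / t₁) • cb + (t / t₁) • (cb + t₁ • w) = cb + t • w := by
    rw [smul_add, smul_smul, sub_smul, one_smul, div_mul_cancel₀ _ ht₁.ne']
    abel
  rwa [heq] at hcomb

lemma polyhedral_convex {m : ℕ} {C : Set (V m)} (h : IsPolyhedral C) : Convex ℝ C := by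
  obtain ⟨s, a, α, rfl⟩ := h
  intro x hx y hy p q hp hq hpq
  intro j
  have h1 : a j ⬝ᵥ (p • x + q • y) = p * (a j ⬝ᵥ x) + q * (a j ⬝ᵥ y) := by
    rw [dotProduct_add, dotProduct_smul, dotProduct_smul]; rfl
  have h2 := mul_le_mul_of_nonneg_left (hx j) hp
  have h3 := mul_le_mul_of_nonneg_left (hy j) hq
  have h4 : p * α j + q * α j = α j := by rw [← add_mul, hpq, one_mul]
  rw [Set.mem_setOf_eq] at *
  linarith

lemma polyhedral_closed {m : ℕ} {C : Set (V m)} (h : IsPolyhedral C) : IsClosed C := by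
  obtain ⟨s, a, α, rfl⟩ := h
  rw [Set.setOf_forall]
  exact isClosed_iInter fun j => isClosed_le (dot_cont (a j)) continuous_const

lemma dot_affine {m : ℕ} (a cb w : V m) (t : ℝ) :
    a ⬝ᵥ (cb + t • w) = a ⬝ᵥ cb + t * (a ⬝ᵥ w) := by
  rw [dotProduct_add, dotProduct_smul]; rfl

/-- The key directional-derivative formula on a piece. -/
lemma dirDeriv_eq_piece {m : ℕ} (h : V m → EReal) (Qk : Matrix (Fin m) (Fin m) ℝ)
    (bk : V m) (βk : ℝ) (Ck : Set (V m)) (hsym : Qk.IsSymm)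
    (hquad : ∀ x ∈ Ck, h x = (((1 / 2) * (x ⬝ᵥ (Qk *ᵥ x)) + bk ⬝ᵥ x + βk : ℝ) : EReal))
    (cb w : V m) (hcb : cb ∈ Ck)
    (hev : ∀ᶠ t in nhdsWithin (0:ℝ) (Set.Ioi 0), cb + t • w ∈ Ck) :
    dirDeriv h cb w = (((Qk *ᵥ cb + bk) ⬝ᵥ w : ℝ) : EReal) := by
  set a : ℝ := (Qk *ᵥ cb + bk) ⬝ᵥ w with ha
  set s : ℝ := (1 / 2) * (w ⬝ᵥ (Qk *ᵥ w)) with hs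
  have hpos : ∀ᶠ t in nhdsWithin (0:ℝ) (Set.Ioi 0), (0:ℝ) < t :=
    self_mem_nhdsWithin
  have hcong : ∀ᶠ t in nhdsWithin (0:ℝ) (Set.Ioi 0),
      ((t⁻¹ : ℝ) : EReal) * (h (cb + t • w) - h cb) = ((a + t * s : ℝ) : EReal) := by
    filter_upwards [hev, hpos] with t hmem ht
    rw [hquad _ hmem, hquad _ hcb]
    have hcast : ((t⁻¹ : ℝ) : EReal) *
        ((((1 / 2) * ((cb + t • w) ⬝ᵥ (Qk *ᵥ (cb + t • w))) + bk ⬝ᵥ (cb + t • w) + βk : ℝ)) -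
          (((1 / 2) * (cb ⬝ᵥ (Qk *ᵥ cb)) + bk ⬝ᵥ cb + βk : ℝ))) =
        (((t⁻¹ : ℝ) * (((1 / 2) * ((cb + t • w) ⬝ᵥ (Qk *ᵥ (cb + t • w))) + bk ⬝ᵥ (cb + t • w) + βk) -
          ((1 / 2) * (cb ⬝ᵥ (Qk *ᵥ cb)) + bk ⬝ᵥ cb + βk)) : ℝ) : EReal) := by
      norm_cast
    rw [hcast]
    congr 1
    have hexp : (cb + t • w) ⬝ᵥ (Qk *ᵥ (cb + t • w)) =
        cb ⬝ᵥ (Qk *ᵥ cb) + 2 * t * (w ⬝ᵥ (Qk *ᵥ cb)) + t ^ 2 * (w ⬝ᵥ (Qk *ᵥ w)) := by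
      have hswap : cb ⬝ᵥ (Qk *ᵥ w) = w ⬝ᵥ (Qk *ᵥ cb) := symm_dot hsym cb w
      rw [Matrix.mulVec_add, Matrix.mulVec_smul]
      rw [dotProduct_add, add_dotProduct, add_dotProduct]
      rw [dotProduct_smul, smul_dotProduct, smul_dotProduct, dotProduct_smul]
      simp only [smul_eq_mul]
      rw [hswap]; ring
    have hbw : bk ⬝ᵥ (cb + t • w) = bk ⬝ᵥ cb + t * (bk ⬝ᵥ w) := dot_affine bk cb w t
    have haw : a = w ⬝ᵥ (Qk *ᵥ cb) + bk ⬝ᵥ w := by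
      rw [ha, add_dotProduct, dotProduct_comm]
    rw [hexp, hbw, haw, hs]
    field_simp
    ring
  rw [dirDeriv, Filter.liminf_congr hcong]
  have htd : Filter.Tendsto (fun t : ℝ => ((a + t * s : ℝ) : EReal))
      (nhdsWithin (0:ℝ) (Set.Ioi 0)) (nhds ((a : ℝ) : EReal)) := by
    have h1 : Filter.Tendsto (fun t : ℝ => a + t * s) (nhds 0) (nhds a) := by
      have h2 : Filter.Tendsto (fun t : ℝ => a + t * s) (nhds 0) (nhds (a + 0 * s)) :=
        tendsto_const_nhds.add (Filter.Tendsto.mul Filter.tendsto_id tendsto_const_nhds)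
      simpa using h2
    exact (continuous_coe_real_ereal.tendsto a).comp (h1.mono_left nhdsWithin_le_nhds)
  exact htd.liminf_eq

/-- Representation of the cone of non-ascent directions for a convex PLQ
composite function under the basic constraint qualification. -/
theorem stmt6 {n m K : ℕ} (h : V m → EReal) (c : V n → V m) (hc : ContDiff ℝ 2 c)
    (C : Fin (K + 1) → Set (V m)) (Q : Fin (K + 1) → Matrix (Fin m) (Fin m) ℝ)
    (b : Fin (K + 1) → V m) (β : Fin (K + 1) → ℝ)
    (hproper : (∃ x, h x < ⊤) ∧ ∀ x, h x ≠ ⊥)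
    (hconv : ConvexFun h)
    (hdom : domf h = ⋃ k, C k)
    (hpoly : ∀ k, IsPolyhedral (C k))
    (hsym : ∀ k, (Q k).IsSymm)
    (hquad : ∀ k, ∀ x ∈ C k,
      h x = (((1 / 2) * (x ⬝ᵥ (Q k *ᵥ x)) + b k ⬝ᵥ x + β k : ℝ) : EReal))
    (xbar : V n) (hx : c xbar ∈ domf h)
    (hbcq : {y : V m | ∀ d, y ⬝ᵥ (fderiv ℝ c xbar d) = 0}
        ∩ normalCone (domf h) (c xbar) = {0}) :
    {d : V n | dirDeriv h (c xbar) (fderiv ℝ c xbar d) ≤ 0}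
      = ⋃ k ∈ {k | c xbar ∈ C k},
          {d : V n | fderiv ℝ c xbar d ∈ tangentConeC (C k) (c xbar) ∧
            (Q k *ᵥ c xbar + b k) ⬝ᵥ (fderiv ℝ c xbar d) ≤ 0} := by
  classical
  set cb : V m := c xbar with hcb
  set F := nhdsWithin (0:ℝ) (Set.Ioi 0) with hF
  haveI : F.NeBot := nhdsGT_neBot 0
  have hpos : ∀ᶠ t in F, (0:ℝ) < t :=
    self_mem_nhdsWithin
  -- h cb is a real number
  obtain ⟨r, hr⟩ : ∃ r : ℝ, h cb = (r : EReal) :=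
    ⟨(h cb).toReal, (EReal.coe_toReal (ne_of_lt hx) (hproper.2 cb)).symm⟩
  -- dom h is convex
  have hdomconv : Convex ℝ (domf h) := by
    intro x hxm y hym p q hp hq hpq
    obtain ⟨rx, hrx⟩ : ∃ rx : ℝ, h x = (rx : EReal) :=
      ⟨(h x).toReal, (EReal.coe_toReal (ne_of_lt hxm) (hproper.2 x)).symm⟩
    obtain ⟨ry, hry⟩ : ∃ ry : ℝ, h y = (ry : EReal) :=
      ⟨(h y).toReal, (EReal.coe_toReal (ne_of_lt hym) (hproper.2 y)).symm⟩
    have h1 : (x, rx) ∈ {p : V m × ℝ | h p.1 ≤ (p.2 : EReal)} := le_of_eq hrx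
    have h2 : (y, ry) ∈ {p : V m × ℝ | h p.1 ≤ (p.2 : EReal)} := le_of_eq hry
    have := hconv h1 h2 hp hq hpq
    simp only [Prod.smul_mk, Prod.mk_add_mk, Set.mem_setOf_eq, smul_eq_mul] at this
    exact lt_of_le_of_lt this (EReal.coe_lt_top _)
  ext d
  set w : V m := fderiv ℝ c xbar d with hw
  simp only [Set.mem_setOf_eq, Set.mem_iUnion, exists_prop]
  constructor
  · -- forward direction
    intro hle
    -- Step 1: the ray enters dom h
    have hex : ∃ t : ℝ, 0 < t ∧ cb + t • w ∈ domf h := by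
      by_contra hcon
      push_neg at hcon
      have htop : ∀ᶠ t in F, ((t⁻¹ : ℝ) : EReal) * (h (cb + t • w) - h cb) = ⊤ := by
        filter_upwards [hpos] with t ht
        have : h (cb + t • w) = ⊤ := by
          have := hcon t ht
          simpa [domf, lt_top_iff_ne_top, not_not] using this
        rw [this, hr, EReal.top_sub_coe, EReal.mul_top_of_pos (EReal.coe_pos.2 (inv_pos.2 ht))]
      rw [dirDeriv, Filter.liminf_congr htop, Filter.liminf_const] at hle
      exact absurd hle (by simp)
    obtain ⟨t₀, ht₀, hmem₀⟩ := hex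
    -- Step 2: the ray is in dom h for all small t, hence (eventually) in some piece
    have hseg := seg_mem hdomconv hx ht₀ hmem₀
    have hevdom : ∀ᶠ t in F, ∃ k, cb + t • w ∈ C k := by
      have hIoo : Set.Ioo (0:ℝ) t₀ ∈ F := Ioo_mem_nhdsGT_of_mem ⟨le_refl _, ht₀⟩
      filter_upwards [hIoo] with t ht
      have := hseg t ht.1 (le_of_lt ht.2)
      rw [hdom] at this
      exact Set.mem_iUnion.1 this
    -- Step 3: pigeonhole ⇒ some piece is visited frequently
    have hfreq : ∃ k, ∃ᶠ t in F, cb + t • w ∈ C k := by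
      by_contra hcon
      push_neg at hcon
      have hall : ∀ᶠ t in F, ∀ k, cb + t • w ∉ C k := Filter.eventually_all.2 hcon
      obtain ⟨t, ⟨k, hk⟩, hnk⟩ := (hevdom.and hall).exists
      exact hnk k hk
    obtain ⟨k, hfk⟩ := hfreq
    -- cb ∈ C k
    have htends : Filter.Tendsto (fun t : ℝ => cb + t • w) F (nhds cb) := by
      have h1 : Filter.Tendsto (fun t : ℝ => cb + t • w) (nhds 0) (nhds cb) := by
        have h2 : Filter.Tendsto (fun t : ℝ => cb + t • w) (nhds 0) (nhds (cb + (0:ℝ) • w)) :=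
          tendsto_const_nhds.add (Filter.Tendsto.smul Filter.tendsto_id tendsto_const_nhds)
        simpa using h2
      exact h1.mono_left nhdsWithin_le_nhds
    have hcbk : cb ∈ C k := by
      have hcl := mem_closure_of_frequently_of_tendsto hfk htends
      rwa [(polyhedral_closed (hpoly k)).closure_eq] at hcl
    -- a definite point on the ray inside C k
    obtain ⟨t₁, ht₁, hm₁⟩ : ∃ t₁ : ℝ, 0 < t₁ ∧ cb + t₁ • w ∈ C k := by
      obtain ⟨t, hm, ht⟩ := (hfk.and_eventually hpos).exists
      exact ⟨t, ht, hm⟩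
    have hsegk := seg_mem (polyhedral_convex (hpoly k)) hcbk ht₁ hm₁
    have hevk : ∀ᶠ t in F, cb + t • w ∈ C k := by
      have hIoo : Set.Ioo (0:ℝ) t₁ ∈ F := Ioo_mem_nhdsGT_of_mem ⟨le_refl _, ht₁⟩
      filter_upwards [hIoo] with t ht
      exact hsegk t ht.1 (le_of_lt ht.2)
    have hdd := dirDeriv_eq_piece h (Q k) (b k) (β k) (C k) (hsym k) (hquad k) cb w hcbk hevk
    refine ⟨k, hcbk, ?_, ?_⟩
    · -- w ∈ tangent cone
      apply subset_closure
      refine ⟨t₁⁻¹, inv_pos.2 ht₁, cb + t₁ • w, hm₁, ?_⟩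
      rw [add_sub_cancel_left, smul_smul, inv_mul_cancel₀ ht₁.ne', one_smul]
    · rw [hdd] at hle
      exact_mod_cast hle
  · -- reverse direction
    rintro ⟨k, hcbk, htan, hlin⟩
    obtain ⟨s, a, α, hCk⟩ := hpoly k
    have hcbk' : ∀ j, a j ⬝ᵥ cb ≤ α j := by rw [hCk] at hcbk; exact hcbk
    -- tangent cone is contained in the active-constraint cone
    have hP : ∀ j, a j ⬝ᵥ cb = α j → a j ⬝ᵥ w ≤ 0 := by
      have hsub : tangentConeC (C k) cb ⊆
          {v : V m | ∀ j, a j ⬝ᵥ cb = α j → a j ⬝ᵥ v ≤ 0} := by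
        apply closure_minimal
        · rintro v ⟨t, ht, e, he, rfl⟩ j hj
          have he' : a j ⬝ᵥ e ≤ α j := by rw [hCk] at he; exact he j
          have : a j ⬝ᵥ (t • (e - cb)) = t * (a j ⬝ᵥ e - a j ⬝ᵥ cb) := by
            rw [dotProduct_smul, dotProduct_sub]; rfl
          rw [this]
          exact mul_nonpos_of_nonneg_of_nonpos (le_of_lt ht) (by rw [hj]; linarith)
        · rw [Set.setOf_forall]
          refine isClosed_iInter fun j => ?_
          by_cases hj : a j ⬝ᵥ cb = α j
          · simp only [hj, forall_const]
            exact isClosed_le (dot_cont (a j)) continuous_const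
          · simp only [hj, false_implies, Set.setOf_true]
            exact isClosed_univ
      exact hsub htan
    -- the ray eventually stays in C k
    have hevk : ∀ᶠ t in F, cb + t • w ∈ C k := by
      have : ∀ᶠ t in F, ∀ j, a j ⬝ᵥ (cb + t • w) ≤ α j := by
        rw [Filter.eventually_all]
        intro j
        by_cases hj : a j ⬝ᵥ cb = α j
        · filter_upwards [hpos] with t ht
          rw [dot_affine]
          have := hP j hj
          nlinarith
        · have hlt : a j ⬝ᵥ cb < α j := lt_of_le_of_ne (hcbk' j) hj
          have htd : Filter.Tendsto (fun t : ℝ => a j ⬝ᵥ (cb + t • w)) F (nhds (a j ⬝ᵥ cb)) := by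
            have h1 : Filter.Tendsto (fun t : ℝ => a j ⬝ᵥ cb + t * (a j ⬝ᵥ w)) (nhds 0)
                (nhds (a j ⬝ᵥ cb)) := by
              have h2 : Filter.Tendsto (fun t : ℝ => a j ⬝ᵥ cb + t * (a j ⬝ᵥ w)) (nhds 0)
                  (nhds (a j ⬝ᵥ cb + 0 * (a j ⬝ᵥ w))) :=
                tendsto_const_nhds.add (Filter.Tendsto.mul Filter.tendsto_id tendsto_const_nhds)
              simpa using h2
            simpa only [dot_affine] using h1.mono_left nhdsWithin_le_nhds
          filter_upwards [htd.eventually_lt_const hlt] with t ht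
          exact le_of_lt ht
      filter_upwards [this] with t ht
      rw [hCk]
      exact ht
    have hdd := dirDeriv_eq_piece h (Q k) (b k) (β k) (C k) (hsym k) (hquad k) cb w hcbk hevk
    rw [hdd]
    exact_mod_cast hlin

end
end

section
/- Let A ∈ ℝ^{m×ℓ} have Null(A) = {0}, and let P_1,…,P_{k̄−1} be ℓ×ℓ diagonal matrices with ±1 entries, P_{k̄} = I. Consider the block matrix 𝒜 whose (i,j) block is AP_j for i ≠ j and (1−k̄)AP_j for i = j (an k̄×k̄ block circulant-type matrix). Then Null(𝒜) = {(P_1 μ, P_2 μ, …, P_{k̄−1} μ, μ)ᵀ : μ ∈ ℝ^ℓ}, which has dimension ℓ. -/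
open Matrix Set

noncomputable section

def blockA {m l K : ℕ} (A : Matrix (Fin m) (Fin l) ℝ)
    (P : Fin (K + 1) → Matrix (Fin l) (Fin l) ℝ) :
    Matrix (Fin (K + 1) × Fin m) (Fin (K + 1) × Fin l) ℝ :=
  Matrix.of fun p q =>
    (if p.1 = q.1 then (1 - ((K + 1 : ℕ) : ℝ)) else 1) * (A * P q.1) p.2 q.2

/-- Null space of the block circulant-type matrix `𝒜`. -/
theorem stmt11 {m l K : ℕ} (A : Matrix (Fin m) (Fin l) ℝ)
    (hnd : {x : Fin l → ℝ | A *ᵥ x = 0} = {0})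
    (P : Fin (K + 1) → Matrix (Fin l) (Fin l) ℝ)
    (hP : ∀ j, ∃ d : Fin l → ℝ, (∀ i, d i = 1 ∨ d i = -1) ∧ P j = Matrix.diagonal d)
    (hlast : P (Fin.last K) = 1) :
    {x : Fin (K + 1) × Fin l → ℝ | blockA A P *ᵥ x = 0}
      = {x | ∃ μ : Fin l → ℝ, ∀ j s, x (j, s) = (P j *ᵥ μ) s} ∧
    Module.finrank ℝ (LinearMap.ker (blockA A P).mulVecLin) = l := by
  have hA0 : ∀ v : Fin l → ℝ, A *ᵥ v = 0 → v = 0 := by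
    intro v hv
    have := Set.ext_iff.mp hnd v
    simpa using this.mp hv
  have hPP : ∀ j (v : Fin l → ℝ), P j *ᵥ (P j *ᵥ v) = v := by
    intro j v
    obtain ⟨d, hd, hdj⟩ := hP j
    rw [hdj, Matrix.mulVec_mulVec, Matrix.diagonal_mul_diagonal]
    have hdd : (fun i => d i * d i) = fun _ => (1 : ℝ) := by
      funext i
      rcases hd i with h | h <;> simp [h]
    rw [hdd, Matrix.diagonal_one, Matrix.one_mulVec]
  set k : ℝ := ((K + 1 : ℕ) : ℝ) with hk
  have hkpos : (0 : ℝ) < k := by positivity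
  -- y j x = P j *ᵥ x_j
  set y : (Fin (K + 1) × Fin l → ℝ) → Fin (K + 1) → Fin l → ℝ :=
    fun x j => P j *ᵥ (fun q => x (j, q)) with hy
  have key : ∀ (x : Fin (K + 1) × Fin l → ℝ) (i : Fin (K + 1)),
      (fun p => (blockA A P *ᵥ x) (i, p))
        = A *ᵥ ((∑ j, y x j) - k • y x i) := by
    intro x i
    funext p
    have hsum : ∀ a : Fin (K + 1) → ℝ,
        ∑ j, (if i = j then (1 - k) else 1) * a j = (∑ j, a j) - k * a i := by
      intro a
      have h1 : ∀ j ∈ Finset.univ, (if i = j then (1 - k) else 1) * a j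
          = a j + (if i = j then -k * a j else 0) := by
        intro j _; by_cases h : i = j <;> simp [h] <;> ring
      rw [Finset.sum_congr rfl h1, Finset.sum_add_distrib, Finset.sum_ite_eq]
      simp; ring
    calc (blockA A P *ᵥ x) (i, p)
        = ∑ j, (if i = j then (1 - k) else 1) * ((A *ᵥ y x j) p) := by
          simp only [Matrix.mulVec, dotProduct, blockA, Matrix.of_apply]
          rw [Fintype.sum_prod_type]
          refine Finset.sum_congr rfl fun j _ => ?_
          have hj : ∑ q, A p q * (y x j) q = ∑ q, (A * P j) p q * x (j, q) := by
            rw [hy]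
            dsimp only
            show (A *ᵥ (P j *ᵥ fun q => x (j, q))) p
              = ((A * P j) *ᵥ fun q => x (j, q)) p
            rw [Matrix.mulVec_mulVec]
          dsimp only
          rw [Finset.sum_congr rfl
              (fun q (_ : q ∈ Finset.univ) => mul_assoc (if i = j then 1 - k else 1)
                ((A * P j) p q) (x (j, q))),
            ← Finset.mul_sum, hj]
      _ = (∑ j, (A *ᵥ y x j) p) - k * (A *ᵥ y x i) p := hsum _
      _ = (A *ᵥ ((∑ j, y x j) - k • y x i)) p := by
          rw [Matrix.mulVec_sub, Matrix.mulVec_smul]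
          have : A *ᵥ (∑ j, y x j) = ∑ j, A *ᵥ y x j := by
            rw [← Matrix.mulVecLin_apply, map_sum]
            simp [Matrix.mulVecLin_apply]
          simp [this, Finset.sum_apply]
  have main : ∀ x : Fin (K + 1) × Fin l → ℝ,
      blockA A P *ᵥ x = 0 ↔ ∃ μ : Fin l → ℝ, ∀ j s, x (j, s) = (P j *ᵥ μ) s := by
    intro x
    constructor
    · intro h
      have hrow : ∀ i, (∑ j, y x j) - k • y x i = 0 := by
        intro i
        apply hA0
        rw [← key x i]
        funext p
        simp [h]
      have hyc : ∀ i, y x i = y x (Fin.last K) := by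
        intro i
        have h1 := hrow i
        have h2 := hrow (Fin.last K)
        have : k • y x i = k • y x (Fin.last K) := by
          have := sub_eq_zero.mp h1
          have h2' := sub_eq_zero.mp h2
          rw [← this, ← h2']
        exact smul_right_injective _ (ne_of_gt hkpos) this
      refine ⟨y x (Fin.last K), fun j s => ?_⟩
      have : P j *ᵥ y x (Fin.last K) = P j *ᵥ y x j := by rw [hyc j]
      rw [this, hy]
      simp only [hPP]
    · rintro ⟨μ, hμ⟩
      have hyj : ∀ j, y x j = μ := by
        intro j
        have : (fun q => x (j, q)) = P j *ᵥ μ := funext fun q => hμ j q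
        rw [hy]; simp only [this, hPP]
      funext ⟨i, p⟩
      have := congrFun (key x i) p
      rw [this]
      have : (∑ j, y x j) - k • y x i = 0 := by
        simp only [hyj, Finset.sum_const, Finset.card_univ, Fintype.card_fin]
        rw [sub_eq_zero, hk]
        ext s
        simp [mul_comm]
      rw [this, Matrix.mulVec_zero]
      rfl
  constructor
  · ext x
    simpa using main x
  · -- finrank
    let T : (Fin l → ℝ) →ₗ[ℝ] (Fin (K + 1) × Fin l → ℝ) :=
      { toFun := fun μ p => (P p.1 *ᵥ μ) p.2
        map_add' := by intro a b; funext p; simp [Matrix.mulVec_add]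
        map_smul' := by intro c a; funext p; simp [Matrix.mulVec_smul] }
    have hker : LinearMap.ker (blockA A P).mulVecLin = LinearMap.range T := by
      ext x
      rw [LinearMap.mem_ker, Matrix.mulVecLin_apply, main x]
      constructor
      · rintro ⟨μ, hμ⟩
        exact ⟨μ, funext fun p => (hμ p.1 p.2).symm⟩
      · rintro ⟨μ, hμ⟩
        exact ⟨μ, fun j s => (congrFun hμ (j, s)).symm⟩
    have hinj : Function.Injective T := by
      rw [← LinearMap.ker_eq_bot]
      ext μ
      simp only [LinearMap.mem_ker, Submodule.mem_bot]
      constructor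
      · intro h
        funext s
        have := congrFun h (Fin.last K, s)
        simpa [T, hlast, Matrix.one_mulVec] using this
      · intro h; subst h; funext p; simp [T]
    rw [hker, LinearMap.finrank_range_of_inj hinj]
    simp
end
end

section
/- (Strong metric subregularity ⇒ unique multiplier) Suppose h is convex PLQ, f = h∘c satisfies the basic constraint qualification at x̄, (x̄,ȳ) solves the KKT generalized equation 0 ∈ g(x,y) + G(x,y) with g(x,y) = (Dc(x)ᵀy, −c(x)) and G(x,y) = ({0}ⁿ, ∂h*(y)), and there is a neighborhood U of (x̄,ȳ) on which (x̄,ȳ) is the unique solution of the linearized generalized equation. Then M(x̄) := Null(Dc(x̄)ᵀ) ∩ ∂h(c(x̄)) = {ȳ}. -/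
/-!
The multiplier set `M(x̄)` is convex, being the intersection of a linear subspace with a
subdifferential. Taking `x = x̄` in the linearized KKT system, the Hessian term and the
linearization of `c` collapse, so the solutions of the form `(x̄, y)` are exactly the
multipliers `y ∈ M(x̄)`; local uniqueness therefore isolates `ȳ` in `M(x̄)`, and a convex set
with an isolated point is that point.
-/


open Matrix Set Filter

noncomputable section

/-- Action of the Hessian of the Lagrangian `x ↦ ⟨ybar, c(x)⟩` at `xbar`,
as a vector: `(∇²(ybar c)(xbar) v) i`. -/
def hessApp {n m : ℕ} (c : V n → V m) (ybar : V m) (xbar : V n) (v : V n) : V n :=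
  fun i => iteratedFDeriv ℝ 2 (fun x => ybar ⬝ᵥ c x) xbar ![v, Pi.single i 1]

open Topology

theorem Convex.eq_singleton_of_inter_nhds_subset {E : Type*} [AddCommGroup E] [Module ℝ E]
    [TopologicalSpace E] [IsTopologicalAddGroup E] [ContinuousSMul ℝ E] {S U : Set E} {x : E}
    (hS : Convex ℝ S) (hx : x ∈ S) (hU : U ∈ 𝓝 x) (hUS : U ∩ S ⊆ {x}) : S = {x} := by
  refine subset_antisymm (fun y hy => ?_) (singleton_subset_iff.2 hx)
  have hline : Tendsto (AffineMap.lineMap x y) (𝓝[>] (0 : ℝ)) (𝓝 x) := by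
    simpa using
      ((continuous_const.lineMap continuous_const continuous_id).tendsto (0 : ℝ)).mono_left
        (nhdsWithin_le_nhds (s := Ioi 0))
  obtain ⟨t, htU, ht⟩ := ((hline.eventually hU).and (Ioo_mem_nhdsGT one_pos)).exists
  have hxt := hUS ⟨htU, hS.lineMap_mem hx hy (Ioo_subset_Icc_self ht)⟩
  rw [mem_singleton_iff, AffineMap.lineMap_eq_left_iff] at hxt
  exact (hxt.resolve_right ht.1.ne').symm

theorem convex_setOf_forall_dotProduct_eq_zero {ι : Type*} {m : ℕ} (w : ι → V m) :
    Convex ℝ {y : V m | ∀ i, y ⬝ᵥ w i = 0} := by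
  intro y hy z hz a b _ _ _ i
  simp [add_dotProduct, smul_dotProduct, hy i, hz i]

theorem convex_subdiff {m : ℕ} (h : V m → EReal) (c : V m) : Convex ℝ (subdiff h c) := by
  intro y₁ hy₁ y₂ hy₂ a b ha hb hab z
  have hcombo : (a • y₁ + b • y₂) ⬝ᵥ (z - c) ≤ max (y₁ ⬝ᵥ (z - c)) (y₂ ⬝ᵥ (z - c)) := by
    simpa only [add_dotProduct, smul_dotProduct, smul_eq_mul] using
      Convex.combo_le_max (y₁ ⬝ᵥ (z - c)) (y₂ ⬝ᵥ (z - c)) ha hb hab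
  refine (add_le_add_right (EReal.coe_le_coe_iff.2 hcombo) _).trans ?_
  rcases max_choice (y₁ ⬝ᵥ (z - c)) (y₂ ⬝ᵥ (z - c)) with hmax | hmax <;> rw [hmax]
  exacts [hy₁ z, hy₂ z]

theorem hessApp_zero {n m : ℕ} (c : V n → V m) (ybar : V m) (xbar : V n) :
    hessApp c ybar xbar 0 = 0 := by
  funext i
  exact ContinuousMultilinearMap.map_coord_zero _ (0 : Fin 2) rfl

theorem stmt15_general {n m : ℕ} (h : V m → EReal) (c : V n → V m)
    (xbar : V n)
    (ybar : V m)
    (hsol : (∀ d, ybar ⬝ᵥ (fderiv ℝ c xbar d) = 0) ∧ ybar ∈ subdiff h (c xbar))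
    (U : Set (V n × V m)) (hU : U ∈ nhds (xbar, ybar))
    (huniq : ∀ p ∈ U,
      ((∀ d : V n, (hessApp c ybar xbar (p.1 - xbar)) ⬝ᵥ d
          + p.2 ⬝ᵥ (fderiv ℝ c xbar d) = 0) ∧
        p.2 ∈ subdiff h (c xbar + fderiv ℝ c xbar (p.1 - xbar))) →
      p = (xbar, ybar)) :
    {y : V m | ∀ d, y ⬝ᵥ (fderiv ℝ c xbar d) = 0} ∩ subdiff h (c xbar) = {ybar} := by
  have hconvex : Convex ℝ ({y : V m | ∀ d, y ⬝ᵥ (fderiv ℝ c xbar d) = 0} ∩ subdiff h (c xbar)) :=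
    (convex_setOf_forall_dotProduct_eq_zero _).inter (convex_subdiff h _)
  have hslice : (xbar, ·) ⁻¹' U ∈ 𝓝 ybar :=
    (Continuous.prodMk_right xbar).continuousAt.preimage_mem_nhds hU
  refine hconvex.eq_singleton_of_inter_nhds_subset hsol hslice ?_
  rintro y ⟨hyU, hy_null, hy_subdiff⟩
  have hsolves := huniq (xbar, y) hyU ⟨fun d => ?_, ?_⟩
  · exact (Prod.ext_iff.1 hsolves).2
  · simp [hessApp_zero, hy_null d]
  · simpa using hy_subdiff

/-- If `(xbar, ybar)` is, on some neighborhood, the unique solution of the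
linearized KKT generalized equation, then the multiplier set `M(xbar)` is the
singleton `{ybar}`. -/
theorem stmt15 {n m : ℕ} (h : V m → EReal) (c : V n → V m) (hc : ContDiff ℝ 2 c)
    (hplq : IsPLQ h) (hconv : ConvexFun h)
    (xbar : V n) (hx : c xbar ∈ domf h)
    (hbcq : {y : V m | ∀ d, y ⬝ᵥ (fderiv ℝ c xbar d) = 0}
        ∩ normalCone (domf h) (c xbar) = {0})
    (ybar : V m)
    (hsol : (∀ d, ybar ⬝ᵥ (fderiv ℝ c xbar d) = 0) ∧ ybar ∈ subdiff h (c xbar))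
    (U : Set (V n × V m)) (hU : U ∈ nhds (xbar, ybar))
    (huniq : ∀ p ∈ U,
      ((∀ d : V n, (hessApp c ybar xbar (p.1 - xbar)) ⬝ᵥ d
          + p.2 ⬝ᵥ (fderiv ℝ c xbar d) = 0) ∧
        p.2 ∈ subdiff h (c xbar + fderiv ℝ c xbar (p.1 - xbar))) →
      p = (xbar, ybar)) :
    {y : V m | ∀ d, y ⬝ᵥ (fderiv ℝ c xbar d) = 0} ∩ subdiff h (c xbar) = {ybar} :=
  stmt15_general h c xbar ybar hsol U hU huniq
end
end

section
/- (Nonsingularity of the restricted KKT matrix) Suppose A ∈ ℝ^{m×ℓ} has Null(A) = {0}, the transversality Null(Dc(x̄)ᵀ) ∩ Ran(A) = {0} holds, and the second-order condition dᵀ Dc(x̄)ᵀ Q Dc(x̄) d + dᵀ H d > 0 holds for all nonzero d ∈ Null(Aᵀ Dc(x̄)), where H = Σ_i ȳ_i ∇²c_i(x̄) and Q is symmetric. Then the (n+m+ℓ)×(n+m+ℓ) block matrix [[H, Dc(x̄)ᵀ, 0], [−Q Dc(x̄), I_m, −AP], [Aᵀ Dc(x̄), 0, 0]] is nonsingular,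 where P is any ±1 diagonal ℓ×ℓ matrix. -/
open Matrix Set

noncomputable section

/-- Jacobian matrix of `c` at `xbar`. -/
def jac {n m : ℕ} (c : V n → V m) (xbar : V n) : Matrix (Fin m) (Fin n) ℝ :=
  Matrix.of fun i j => fderiv ℝ (fun x => c x i) xbar (Pi.single j 1)

/-- Hessian of the Lagrangian `x ↦ ⟨y, c(x)⟩` at `xbar`: `H = Σ_i y_i ∇²c_i(xbar)`. -/
def hess {n m : ℕ} (c : V n → V m) (y : V m) (xbar : V n) : Matrix (Fin n) (Fin n) ℝ :=
  Matrix.of fun i j =>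
    iteratedFDeriv ℝ 2 (fun x => y ⬝ᵥ c x) xbar ![Pi.single i 1, Pi.single j 1]

/-- The restricted KKT matrix `[[H, Jᵀ, 0], [−QJ, I, −AP], [AᵀJ, 0, 0]]`. -/
def kktM {n m l : ℕ} (H : Matrix (Fin n) (Fin n) ℝ) (J : Matrix (Fin m) (Fin n) ℝ)
    (Q : Matrix (Fin m) (Fin m) ℝ) (A : Matrix (Fin m) (Fin l) ℝ)
    (P : Matrix (Fin l) (Fin l) ℝ) :
    Matrix (Fin n ⊕ (Fin m ⊕ Fin l)) (Fin n ⊕ (Fin m ⊕ Fin l)) ℝ :=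
  Matrix.fromBlocks H (Matrix.fromCols Jᵀ 0)
    (Matrix.fromRows (-(Q * J)) (Aᵀ * J))
    (Matrix.fromBlocks 1 (-(A * P)) 0 0)


theorem kktM_mulVec_sumElim {n m l : ℕ} (H : Matrix (Fin n) (Fin n) ℝ)
    (J : Matrix (Fin m) (Fin n) ℝ) (Q : Matrix (Fin m) (Fin m) ℝ) (A : Matrix (Fin m) (Fin l) ℝ)
    (P : Matrix (Fin l) (Fin l) ℝ) (d : Fin n → ℝ) (v : Fin m → ℝ) (w : Fin l → ℝ) :
    kktM H J Q A P *ᵥ Sum.elim d (Sum.elim v w) =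
      Sum.elim (H *ᵥ d + Jᵀ *ᵥ v)
        (Sum.elim (v - (Q * J) *ᵥ d - (A * P) *ᵥ w) ((Aᵀ * J) *ᵥ d)) := by
  simp only [kktM, fromBlocks_mulVec, fromCols_mulVec_sumElim, fromRows_mulVec,
    Sum.elim_comp_inl, Sum.elim_comp_inr, zero_mulVec, one_mulVec, neg_mulVec, add_zero,
    ← Sum.elim_add_add]
  congr 2
  abel

theorem dotProduct_mulVec_eq_zero_of_transpose_mulVec_eq_zero {m l : ℕ}
    {A : Matrix (Fin m) (Fin l) ℝ} {y : Fin m → ℝ} (hy : Aᵀ *ᵥ y = 0) (u : Fin l → ℝ) :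
    y ⬝ᵥ (A *ᵥ u) = 0 := by
  rw [dotProduct_mulVec, ← mulVec_transpose, hy, zero_dotProduct]

theorem eq_zero_of_kktM_mulVec_eq_zero {n m l : ℕ} {H : Matrix (Fin n) (Fin n) ℝ}
    {J : Matrix (Fin m) (Fin n) ℝ} {Q : Matrix (Fin m) (Fin m) ℝ} {A : Matrix (Fin m) (Fin l) ℝ}
    {P : Matrix (Fin l) (Fin l) ℝ} (hP : P.det ≠ 0)
    (hnd : {u : Fin l → ℝ | A *ᵥ u = 0} = {0})
    (htrans : {y : V m | Jᵀ *ᵥ y = 0} ∩ {y | ∃ u, y = A *ᵥ u} = {0})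
    (hsosc : ∀ d : V n, d ≠ 0 → (Aᵀ * J) *ᵥ d = 0 →
      0 < (J *ᵥ d) ⬝ᵥ (Q *ᵥ (J *ᵥ d)) + d ⬝ᵥ (H *ᵥ d))
    {d : Fin n → ℝ} {v : Fin m → ℝ} {w : Fin l → ℝ}
    (hker : kktM H J Q A P *ᵥ Sum.elim d (Sum.elim v w) = 0) :
    d = 0 ∧ v = 0 ∧ w = 0 := by
  rw [kktM_mulVec_sumElim, ← Sum.elim_zero_zero, ← Sum.elim_zero_zero] at hker
  simp only [Sum.elim_eq_iff] at hker
  obtain ⟨hrow₁, hrow₂, hrow₃⟩ := hker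
  have hv : v = Q *ᵥ (J *ᵥ d) + A *ᵥ (P *ᵥ w) := by
    rw [mulVec_mulVec, mulVec_mulVec]
    linear_combination hrow₂
  have hJd : Aᵀ *ᵥ (J *ᵥ d) = 0 := by rwa [mulVec_mulVec]
  have hd : d = 0 := by
    by_contra hd
    have hHd : d ⬝ᵥ (H *ᵥ d) = -((J *ᵥ d) ⬝ᵥ v) := by
      rw [eq_neg_of_add_eq_zero_left hrow₁, dotProduct_neg, dotProduct_mulVec, ← mulVec_transpose,
        transpose_transpose, dotProduct_comm]
    -- `J d` is orthogonal to `Ran A`, so only the `Q`-part of `v` is seen by `J d`.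
    have := hsosc d hd hrow₃
    rw [hHd, hv, dotProduct_add,
      dotProduct_mulVec_eq_zero_of_transpose_mulVec_eq_zero hJd] at this
    simp at this
  have hvA : v = A *ᵥ (P *ᵥ w) := by simpa [hd] using hv
  have hv0 : v = 0 := by
    have hmem : v ∈ {y : V m | Jᵀ *ᵥ y = 0} ∩ {y | ∃ u, y = A *ᵥ u} := by
      refine ⟨?_, P *ᵥ w, hvA⟩
      simpa [hd] using hrow₁
    rwa [htrans] at hmem
  have hPw : P *ᵥ w ∈ {u : Fin l → ℝ | A *ᵥ u = 0} := by
    rw [Set.mem_ofPred_eq, ← hvA, hv0]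
  rw [hnd] at hPw
  exact ⟨hd, hv0, eq_zero_of_mulVec_eq_zero hP hPw⟩

theorem det_kktM_ne_zero {n m l : ℕ} {H : Matrix (Fin n) (Fin n) ℝ}
    {J : Matrix (Fin m) (Fin n) ℝ} {Q : Matrix (Fin m) (Fin m) ℝ} {A : Matrix (Fin m) (Fin l) ℝ}
    {P : Matrix (Fin l) (Fin l) ℝ} (hP : P.det ≠ 0)
    (hnd : {u : Fin l → ℝ | A *ᵥ u = 0} = {0})
    (htrans : {y : V m | Jᵀ *ᵥ y = 0} ∩ {y | ∃ u, y = A *ᵥ u} = {0})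
    (hsosc : ∀ d : V n, d ≠ 0 → (Aᵀ * J) *ᵥ d = 0 →
      0 < (J *ᵥ d) ⬝ᵥ (Q *ᵥ (J *ᵥ d)) + d ⬝ᵥ (H *ᵥ d)) :
    (kktM H J Q A P).det ≠ 0 := by
  rw [Ne, ← exists_mulVec_eq_zero_iff]
  rintro ⟨x, hx, hker⟩
  rw [← Sum.elim_comp_inl_inr x, ← Sum.elim_comp_inl_inr (x ∘ Sum.inr)] at hx hker
  obtain ⟨hd, hv, hw⟩ := eq_zero_of_kktM_mulVec_eq_zero hP hnd htrans hsosc hker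
  rw [hd, hv, hw, Sum.elim_zero_zero, Sum.elim_zero_zero] at hx
  exact hx rfl

theorem det_diagonal_ne_zero_of_sign {l : ℕ} {s : Fin l → ℝ} (hs : ∀ i, s i = 1 ∨ s i = -1) :
    (diagonal s).det ≠ 0 := by
  rw [det_diagonal, Finset.prod_ne_zero_iff]
  intro i _
  rcases hs i with h | h <;> norm_num [h]

theorem stmt16_general {n m l : ℕ} (c : V n → V m)
    (xbar : V n) (ybar : V m)
    (A : Matrix (Fin m) (Fin l) ℝ)
    (Q : Matrix (Fin m) (Fin m) ℝ)
    (P : Matrix (Fin l) (Fin l) ℝ)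
    (hP : ∃ d : Fin l → ℝ, (∀ i, d i = 1 ∨ d i = -1) ∧ P = Matrix.diagonal d)
    (hnd : {u : Fin l → ℝ | A *ᵥ u = 0} = {0})
    (htrans : {y : V m | (jac c xbar)ᵀ *ᵥ y = 0} ∩ {y | ∃ u, y = A *ᵥ u} = {0})
    (hsosc : ∀ d : V n, d ≠ 0 → (Aᵀ * jac c xbar) *ᵥ d = 0 →
      0 < (jac c xbar *ᵥ d) ⬝ᵥ (Q *ᵥ (jac c xbar *ᵥ d))
        + d ⬝ᵥ (hess c ybar xbar *ᵥ d)) :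
    (kktM (hess c ybar xbar) (jac c xbar) Q A P).det ≠ 0 := by
  obtain ⟨s, hs, rfl⟩ := hP
  exact det_kktM_ne_zero (det_diagonal_ne_zero_of_sign hs) hnd htrans hsosc

/-- Nonsingularity of the restricted KKT matrix under nondegeneracy,
transversality and the second-order sufficient condition. -/
theorem stmt16 {n m l : ℕ} (c : V n → V m) (hc : ContDiff ℝ 2 c)
    (xbar : V n) (ybar : V m)
    (A : Matrix (Fin m) (Fin l) ℝ)
    (Q : Matrix (Fin m) (Fin m) ℝ) (hQ : Q.IsSymm)
    (P : Matrix (Fin l) (Fin l) ℝ)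
    (hP : ∃ d : Fin l → ℝ, (∀ i, d i = 1 ∨ d i = -1) ∧ P = Matrix.diagonal d)
    (hnd : {u : Fin l → ℝ | A *ᵥ u = 0} = {0})
    (htrans : {y : V m | (jac c xbar)ᵀ *ᵥ y = 0} ∩ {y | ∃ u, y = A *ᵥ u} = {0})
    (hsosc : ∀ d : V n, d ≠ 0 → (Aᵀ * jac c xbar) *ᵥ d = 0 →
      0 < (jac c xbar *ᵥ d) ⬝ᵥ (Q *ᵥ (jac c xbar *ᵥ d))
        + d ⬝ᵥ (hess c ybar xbar *ᵥ d)) :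
    (kktM (hess c ybar xbar) (jac c xbar) Q A P).det ≠ 0 :=
  stmt16_general c xbar ybar A Q P hP hnd htrans hsosc
end
end
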